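/- Conjunctive nested regular path queries are not expressible in nested regular path queries: there exist two nre-triple patterns whose conjunction cannot be expressed by any single nre-triple pattern. Concretely, there is no nested regular expression e such that for all RDF graphs G, ⟦(?x, e, ?y)⟧_G = ⟦(?x, next, ?y) ∧ (?x, next/next, ?y)⟧_G, where the latter denotes the set of mappings μ with (μ(?x), μ(?y)) ∈ ⟦next⟧_G ∩ ⟦next/next⟧_G. -/

import Mathlib

/-!
The triangle with edges `a → b → c` and `a → c` satisfies the conjunction at `(a, c)`. In its
double cover, the hexagon in which the shortcut `a → c` leads to the other copy of `c`, no pair is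
joined both by an edge and by a path of length two. Yet evaluation of a nested regular expression
`e` only walks along triples, checks membership in the active domain and tests constants; once
the constants of `e` are chosen outside the triangle, every step taken in the triangle lifts along
the covering relation to the hexagon. So if `e` holds at `(a, c)` in the triangle, it holds at
some pair of the hexagon.
-/

/-- Navigation axes for nested regular expressions. -/
inductive Axis where
  | self | next | edge | node | nextInv | edgeInv | nodeInv
deriving DecidableEq

/-- Nested regular expressions over a universe `U` of constants. -/
inductive NRE (U : Type) where
  | axis : Axis → NRE U
  | axisC : Axis → U → NRE U
  | nest : Axis → NRE U → NRE U
  | comp : NRE U → NRE U → NRE U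
  | union : NRE U → NRE U → NRE U
  | star : NRE U → NRE U

variable {U : Type}

/-- Active domain of an RDF graph. -/
def adom (G : Set (U × U × U)) : Set U :=
  {c | ∃ t ∈ G, c = t.1 ∨ c = t.2.1 ∨ c = t.2.2}

/-- Relational composition. -/
def rcomp (R S : Set (U × U)) : Set (U × U) :=
  {p | ∃ c, (p.1, c) ∈ R ∧ (c, p.2) ∈ S}

/-- Evaluation of a bare axis on an RDF graph. -/
def axisFwd (G : Set (U × U × U)) : Axis → Set (U × U)
  | .self => {p | p.1 = p.2 ∧ p.1 ∈ adom G}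
  | .next => {p | ∃ c, (p.1, c, p.2) ∈ G}
  | .edge => {p | ∃ c, (p.1, p.2, c) ∈ G}
  | .node => {p | ∃ c, (c, p.1, p.2) ∈ G}
  | .nextInv => {p | ∃ c, (p.2, c, p.1) ∈ G}
  | .edgeInv => {p | ∃ c, (p.2, p.1, c) ∈ G}
  | .nodeInv => {p | ∃ c, (c, p.2, p.1) ∈ G}

/-- Evaluation of `axis::c` on an RDF graph. -/
def axisCEval (G : Set (U × U × U)) : Axis → U → Set (U × U)
  | .self, c => {p | p.1 = p.2 ∧ p.1 = c ∧ c ∈ adom G}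
  | .next, c => {p | (p.1, c, p.2) ∈ G}
  | .edge, c => {p | (p.1, p.2, c) ∈ G}
  | .node, c => {p | (c, p.1, p.2) ∈ G}
  | .nextInv, c => {p | (p.2, c, p.1) ∈ G}
  | .edgeInv, c => {p | (p.2, p.1, c) ∈ G}
  | .nodeInv, c => {p | (c, p.2, p.1) ∈ G}

/-- Evaluation of a nested regular expression on an RDF graph. -/
def NRE.eval (G : Set (U × U × U)) : NRE U → Set (U × U)
  | .axis a => axisFwd G a
  | .axisC a c => axisCEval G a c
  | .nest .self e => {p | p.1 = p.2 ∧ ∃ c, (p.1, c) ∈ e.eval G}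
  | .nest a e => {p | ∃ c d, p ∈ axisCEval G a c ∧ (c, d) ∈ e.eval G}
  | .comp e1 e2 => rcomp (e1.eval G) (e2.eval G)
  | .union e1 e2 => e1.eval G ∪ e2.eval G
  | .star e => {p | p.1 = p.2 ∧ p.1 ∈ adom G} ∪
      {p | Relation.TransGen (fun a b => (a, b) ∈ e.eval G) p.1 p.2}

/-- The two query variables ?x and ?y. -/
inductive QVar where
  | x | y
deriving DecidableEq

theorem Relation.TransGen.exists_of_simulation {α β : Type*} {r : α → α → Prop}
    {s : β → β → Prop} {R : α → β → Prop}
    (hsim : ∀ a b x, R a x → r a b → ∃ y, R b y ∧ s x y) {a b : α} {x : β}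
    (hab : Relation.TransGen r a b) (hx : R a x) : ∃ y, R b y ∧ Relation.TransGen s x y := by
  induction hab with
  | single hab =>
    obtain ⟨y, hy, hxy⟩ := hsim _ _ x hx hab
    exact ⟨y, hy, .single hxy⟩
  | tail _ hbc ih =>
    obtain ⟨y, hy, hxy⟩ := ih
    obtain ⟨z, hz, hyz⟩ := hsim _ _ y hy hbc
    exact ⟨z, hz, hxy.tail hyz⟩

theorem exists_embedding_forall_notMem {α β : Type*} [Finite α] [Infinite β] {s : Set β}
    (hs : s.Finite) : ∃ ν : α ↪ β, ∀ a, ν a ∉ s := by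
  have : Infinite ↥sᶜ := hs.infinite_compl.to_subtype
  obtain ⟨n, ⟨e⟩⟩ := Finite.exists_equiv_fin α
  exact ⟨(e.toEmbedding.trans Fin.valEmbedding).trans
    ((Infinite.natEmbedding _).trans (Function.Embedding.subtype _)),
    fun _ => (Infinite.natEmbedding ↥sᶜ _).2⟩

def NRE.consts : NRE U → List U
  | .axis _ => []
  | .axisC _ c => [c]
  | .nest _ e => e.consts
  | .comp e1 e2 => e1.consts ++ e2.consts
  | .union e1 e2 => e1.consts ++ e2.consts
  | .star e => e.consts

theorem mem_adom_of_mem {G : Set (U × U × U)} {s p o : U} (h : (s, p, o) ∈ G) :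
    s ∈ adom G ∧ p ∈ adom G ∧ o ∈ adom G :=
  ⟨⟨_, h, .inl rfl⟩, ⟨_, h, .inr (.inl rfl)⟩, ⟨_, h, .inr (.inr rfl)⟩⟩

theorem mem_adom_of_mem_axisCEval {G : Set (U × U × U)} {a : Axis} {c : U} {p : U × U}
    (h : p ∈ axisCEval G a c) : c ∈ adom G := by
  cases a
  all_goals first
    | exact h.2.2
    | exact (mem_adom_of_mem h).1
    | exact (mem_adom_of_mem h).2.1
    | exact (mem_adom_of_mem h).2.2

theorem axisFwd_eq_of_ne_self (G : Set (U × U × U)) {a : Axis} (ha : a ≠ .self) :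
    axisFwd G a = {p | ∃ c, p ∈ axisCEval G a c} := by
  cases a <;> first | exact absurd rfl ha | rfl

theorem NRE.eval_nest_of_ne_self (G : Set (U × U × U)) {a : Axis} (ha : a ≠ .self) (e : NRE U) :
    (NRE.nest a e).eval G = {p | ∃ c d, p ∈ axisCEval G a c ∧ (c, d) ∈ e.eval G} := by
  cases a <;> first | exact absurd rfl ha | rfl

structure IsSimulation (R : U → U → Prop) (G₁ G₂ : Set (U × U × U)) : Prop where
  subj : ∀ {s p o x}, R s x → (s, p, o) ∈ G₁ → ∃ p' o', (x, p', o') ∈ G₂ ∧ R p p' ∧ R o o'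
  pred : ∀ {s p o x}, R p x → (s, p, o) ∈ G₁ → ∃ s' o', (s', x, o') ∈ G₂ ∧ R s s' ∧ R o o'
  obj : ∀ {s p o x}, R o x → (s, p, o) ∈ G₁ → ∃ s' p', (s', p', x) ∈ G₂ ∧ R s s' ∧ R p p'

namespace IsSimulation

variable {R : U → U → Prop} {G₁ G₂ : Set (U × U × U)}

theorem mem_adom (hR : IsSimulation R G₁ G₂) {u x : U} (hux : R u x) (hu : u ∈ adom G₁) :
    x ∈ adom G₂ := by
  obtain ⟨⟨s, p, o⟩, ht, rfl | rfl | rfl⟩ := hu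
  · obtain ⟨_, _, ht', -⟩ := hR.subj hux ht
    exact (mem_adom_of_mem ht').1
  · obtain ⟨_, _, ht', -⟩ := hR.pred hux ht
    exact (mem_adom_of_mem ht').2.1
  · obtain ⟨_, _, ht', -⟩ := hR.obj hux ht
    exact (mem_adom_of_mem ht').2.2

theorem exists_axisCEval (hR : IsSimulation R G₁ G₂) {a : Axis} (ha : a ≠ .self)
    {u v c x : U} (hux : R u x) (huv : (u, v) ∈ axisCEval G₁ a c) :
    ∃ c' y, (x, y) ∈ axisCEval G₂ a c' ∧ R c c' ∧ R v y := by
  cases a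
  · exact absurd rfl ha
  · obtain ⟨c', y, h, hc, hv⟩ := hR.subj hux huv; exact ⟨c', y, h, hc, hv⟩
  · obtain ⟨y, c', h, hv, hc⟩ := hR.subj hux huv; exact ⟨c', y, h, hc, hv⟩
  · obtain ⟨c', y, h, hc, hv⟩ := hR.pred hux huv; exact ⟨c', y, h, hc, hv⟩
  · obtain ⟨y, c', h, hv, hc⟩ := hR.obj hux huv; exact ⟨c', y, h, hc, hv⟩
  · obtain ⟨y, c', h, hv, hc⟩ := hR.pred hux huv; exact ⟨c', y, h, hc, hv⟩
  · obtain ⟨c', y, h, hc, hv⟩ := hR.obj hux huv; exact ⟨c', y, h, hc, hv⟩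

theorem exists_eval (hR : IsSimulation R G₁ G₂) (e : NRE U)
    (he : ∀ c ∈ e.consts, c ∉ adom G₁) {u v x : U} (hux : R u x) (huv : (u, v) ∈ e.eval G₁) :
    ∃ y, R v y ∧ (x, y) ∈ e.eval G₂ := by
  induction e generalizing u v x with
  | axis a =>
    by_cases ha : a = .self
    · subst ha
      obtain ⟨rfl : u = v, hu⟩ := huv
      exact ⟨x, hux, rfl, hR.mem_adom hux hu⟩
    · simp only [NRE.eval, axisFwd_eq_of_ne_self _ ha, Set.mem_ofPred_eq] at huv ⊢
      obtain ⟨c, huv⟩ := huv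
      obtain ⟨c', y, hxy, -, hvy⟩ := hR.exists_axisCEval ha hux huv
      exact ⟨y, hvy, c', hxy⟩
  | axisC a c =>
    exact absurd (mem_adom_of_mem_axisCEval huv) (he c (List.mem_singleton_self c))
  | nest a e ih =>
    by_cases ha : a = .self
    · subst ha
      obtain ⟨rfl : u = v, c, huc⟩ := huv
      obtain ⟨c', -, hxc⟩ := ih he hux huc
      exact ⟨x, hux, rfl, c', hxc⟩
    · rw [NRE.eval_nest_of_ne_self _ ha] at huv ⊢
      obtain ⟨c, d, huv, hcd⟩ := huv
      obtain ⟨c', y, hxy, hcc', hvy⟩ := hR.exists_axisCEval ha hux huv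
      obtain ⟨d', -, hcd'⟩ := ih he hcc' hcd
      exact ⟨y, hvy, c', d', hxy, hcd'⟩
  | comp e₁ e₂ ih₁ ih₂ =>
    obtain ⟨c, huc, hcv⟩ := huv
    obtain ⟨c', hcc', hxc'⟩ := ih₁ (fun c hc => he c (List.mem_append_left _ hc)) hux huc
    obtain ⟨y, hvy, hc'y⟩ := ih₂ (fun c hc => he c (List.mem_append_right _ hc)) hcc' hcv
    exact ⟨y, hvy, c', hxc', hc'y⟩
  | union e₁ e₂ ih₁ ih₂ =>
    rcases huv with huv | huv
    · obtain ⟨y, hvy, hxy⟩ := ih₁ (fun c hc => he c (List.mem_append_left _ hc)) hux huv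
      exact ⟨y, hvy, .inl hxy⟩
    · obtain ⟨y, hvy, hxy⟩ := ih₂ (fun c hc => he c (List.mem_append_right _ hc)) hux huv
      exact ⟨y, hvy, .inr hxy⟩
  | star e ih =>
    rcases huv with ⟨rfl : u = v, hu⟩ | huv
    · exact ⟨x, hux, .inl ⟨rfl, hR.mem_adom hux hu⟩⟩
    · obtain ⟨y, hvy, hxy⟩ := huv.exists_of_simulation (fun _ _ _ h₁ h₂ => ih he h₁ h₂) hux
      exact ⟨y, hvy, .inr hxy⟩

end IsSimulation

theorem eq_of_setOf_mappings_eq {A B : Set (U × U)}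
    (h : {μ : QVar → U | (μ QVar.x, μ QVar.y) ∈ A} = {μ : QVar → U | (μ QVar.x, μ QVar.y) ∈ B}) :
    A = B := by
  ext ⟨a, b⟩
  exact Set.ext_iff.mp h fun q => QVar.rec a b q

section Hexagon

variable (ν : Fin 7 ↪ U)

def triangle : Set (U × U × U) :=
  {(ν 0, ν 6, ν 2), (ν 0, ν 6, ν 1), (ν 1, ν 6, ν 2)}

def hexagon : Set (U × U × U) :=
  {(ν 0, ν 6, ν 5), (ν 0, ν 6, ν 1), (ν 1, ν 6, ν 2),
    (ν 3, ν 6, ν 2), (ν 3, ν 6, ν 4), (ν 4, ν 6, ν 5)}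

-- `ν 3, ν 4, ν 5` are the second copies of the triangle's nodes `ν 0, ν 1, ν 2`, and the
-- shortcut `ν 0 → ν 2` switches copies; `ν 6` is the only predicate.
def hexagonCover (u x : U) : Prop :=
  (u, x) ∈ ({(ν 0, ν 0), (ν 1, ν 1), (ν 2, ν 2), (ν 0, ν 3), (ν 1, ν 4), (ν 2, ν 5),
    (ν 6, ν 6)} : Set (U × U))

theorem adom_triangle_subset : adom (triangle ν) ⊆ Set.range ν := by
  rintro c ⟨t, ht, hc⟩
  simp only [triangle, Set.mem_insert_iff, Set.mem_singleton_iff] at ht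
  rcases ht with rfl | rfl | rfl <;> rcases hc with rfl | rfl | rfl <;> exact ⟨_, rfl⟩

theorem mem_next_inter_next_comp_next_triangle :
    (ν 0, ν 2) ∈ axisFwd (triangle ν) .next ∩
      rcomp (axisFwd (triangle ν) .next) (axisFwd (triangle ν) .next) :=
  ⟨⟨ν 6, by simp [triangle]⟩, ν 1, ⟨ν 6, by simp [triangle]⟩, ⟨ν 6, by simp [triangle]⟩⟩

theorem next_inter_next_comp_next_hexagon :
    axisFwd (hexagon ν) .next ∩
      rcomp (axisFwd (hexagon ν) .next) (axisFwd (hexagon ν) .next) = ∅ := by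
  refine Set.eq_empty_of_forall_notMem ?_
  rintro ⟨u, v⟩ ⟨⟨c, huv⟩, w, ⟨c₁, huw⟩, ⟨c₂, hwv⟩⟩
  simp only [hexagon, Set.mem_insert_iff, Set.mem_singleton_iff, Prod.mk.injEq] at huv huw hwv
  obtain ⟨rfl, -, rfl⟩ | ⟨rfl, -, rfl⟩ | ⟨rfl, -, rfl⟩ | ⟨rfl, -, rfl⟩ | ⟨rfl, -, rfl⟩ |
    ⟨rfl, -, rfl⟩ := huw <;> simp_all

theorem isSimulation_hexagonCover : IsSimulation (hexagonCover ν) (triangle ν) (hexagon ν) := by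
  constructor <;> intro s p o x hsx hspo <;>
    simp only [triangle, hexagonCover, Set.mem_insert_iff, Set.mem_singleton_iff,
      Prod.mk.injEq] at hsx hspo <;>
    obtain ⟨rfl, rfl, rfl⟩ | ⟨rfl, rfl, rfl⟩ | ⟨rfl, rfl, rfl⟩ := hspo <;>
    simp only [EmbeddingLike.apply_eq_iff_eq, Fin.reduceEq, zero_ne_one, one_ne_zero, false_and,
      true_and, false_or, or_false] at hsx <;> rcases hsx with rfl | rfl <;>
    simp [hexagon, hexagonCover, or_and_right, exists_or]

end Hexagon

/-- CNRPQ is not expressible in NRPQ: no nested regular expression e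
satisfies, for all RDF graphs G,
⟦(?x,e,?y)⟧_G = ⟦(?x,next,?y) ∧ (?x,next/next,?y)⟧_G,
where patterns evaluate to sets of mappings μ : {?x,?y} → U. -/
theorem cnrpq_not_expressible_in_nrpq {U : Type} [Infinite U] :
    ¬ ∃ e : NRE U, ∀ G : Set (U × U × U), G.Finite →
      {μ : QVar → U | (μ QVar.x, μ QVar.y) ∈ NRE.eval G e}
        = {μ : QVar → U | (μ QVar.x, μ QVar.y) ∈
            axisFwd G Axis.next ∩ rcomp (axisFwd G Axis.next) (axisFwd G Axis.next)} := by
  rintro ⟨e, he⟩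
  obtain ⟨ν, hν⟩ := exists_embedding_forall_notMem (α := Fin 7) e.consts.finite_toSet
  have htriangle := eq_of_setOf_mappings_eq (he (triangle ν) (by simp [triangle]))
  have hhexagon := eq_of_setOf_mappings_eq (he (hexagon ν) (by simp [hexagon]))
  have hconsts : ∀ c ∈ e.consts, c ∉ adom (triangle ν) := fun c hc hc' => by
    obtain ⟨i, rfl⟩ := adom_triangle_subset ν hc'
    exact hν i hc
  obtain ⟨y, -, hy⟩ := (isSimulation_hexagonCover ν).exists_eval e hconsts
    (x := ν 0) (by simp [hexagonCover]) (htriangle ▸ mem_next_inter_next_comp_next_triangle ν)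
  rw [hhexagon, next_inter_next_comp_next_hexagon] at hy
  exact hy
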